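/- arXiv:1902.08404 — 4 statements merged into one kernel-verified Lean document; each statement's English description precedes it below -/
import Mathlib

section
/- Let U = (u_1, …, u_M) with u_i ∈ ℝ^{m_i}, and define z(U) := Σ_{1 ≤ i < j ≤ M} ( ‖u_i‖²‖u_j‖² (1,1)ᵀ + (u_i ⊛ u_j)(1,−1)ᵀ ) ∈ ℝ². Then z(U) = (0,0)ᵀ if and only if at most one of the vectors u_1, …, u_M is nonzero. -/
open scoped BigOperators

/-- The map `z` from the paper: `z(U) = ∑_{i<j} (‖u_i‖²‖u_j‖²(1,1)ᵀ + (u_i ⊛ u_j)(1,−1)ᵀ)`,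
where `a ⊛ b = (∑ entries of a)(∑ entries of b)`. -/
noncomputable def zmap {M : ℕ} {m : Fin M → ℕ}
    (u : ∀ i : Fin M, EuclideanSpace ℝ (Fin (m i))) : ℝ × ℝ :=
  ∑ i : Fin M, ∑ j : Fin M,
    if i < j then
      (‖u i‖ ^ 2 * ‖u j‖ ^ 2 + (∑ k, u i k) * (∑ l, u j l),
       ‖u i‖ ^ 2 * ‖u j‖ ^ 2 - (∑ k, u i k) * (∑ l, u j l))
    else 0

/-- `z(U) = (0,0)ᵀ` iff at most one of the vectors `u_1, …, u_M` is nonzero. -/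
theorem stmt_2 (M : ℕ) (hM : 0 < M) (m : Fin M → ℕ) (hm : ∀ i, 0 < m i)
    (u : ∀ i : Fin M, EuclideanSpace ℝ (Fin (m i))) :
    zmap u = (0, 0) ↔ ∀ i j : Fin M, u i ≠ 0 → u j ≠ 0 → i = j := by
  constructor
  · intro h
    have h1 : (zmap u).1 = 0 := by rw [h]
    have h2 : (zmap u).2 = 0 := by rw [h]
    simp only [zmap, Prod.fst_sum, Prod.snd_sum, apply_ite Prod.fst, apply_ite Prod.snd,
      Prod.fst_zero, Prod.snd_zero] at h1 h2
    have hsum : ∑ p : Fin M, ∑ q : Fin M,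
        (if p < q then 2 * (‖u p‖ ^ 2 * ‖u q‖ ^ 2) else 0) = 0 := by
      calc ∑ p : Fin M, ∑ q : Fin M,
          (if p < q then 2 * (‖u p‖ ^ 2 * ‖u q‖ ^ 2) else 0)
          = (∑ p : Fin M, ∑ q : Fin M,
              (if p < q then ‖u p‖ ^ 2 * ‖u q‖ ^ 2 + (∑ k, u p k) * (∑ l, u q l) else 0)) +
            (∑ p : Fin M, ∑ q : Fin M,
              (if p < q then ‖u p‖ ^ 2 * ‖u q‖ ^ 2 - (∑ k, u p k) * (∑ l, u q l) else 0)) := by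
            rw [← Finset.sum_add_distrib]
            refine Finset.sum_congr rfl fun p _ => ?_
            rw [← Finset.sum_add_distrib]
            refine Finset.sum_congr rfl fun q _ => ?_
            split_ifs <;> ring
        _ = 0 := by rw [h1, h2, add_zero]
    have key : ∀ p q : Fin M, p < q → ‖u p‖ ^ 2 * ‖u q‖ ^ 2 = 0 := by
      intro p q hpq
      have hnn : ∀ p ∈ Finset.univ, ∀ q ∈ Finset.univ,
          (0:ℝ) ≤ (if p < q then 2 * (‖u p‖ ^ 2 * ‖u q‖ ^ 2) else 0) := by
        intro p _ q _
        split_ifs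
        · positivity
        · exact le_rfl
      have := (Finset.sum_eq_zero_iff_of_nonneg
        (fun p _ => Finset.sum_nonneg (fun q _ => hnn p (Finset.mem_univ p) q (Finset.mem_univ q)))).mp hsum p (Finset.mem_univ p)
      have := (Finset.sum_eq_zero_iff_of_nonneg
        (fun q hq => hnn p (Finset.mem_univ p) q hq)).mp this q (Finset.mem_univ q)
      simp only [if_pos hpq] at this
      linarith
    intro i j hi hj
    by_contra hne
    rcases lt_or_gt_of_ne hne with hlt | hgt
    · have := key i j hlt
      have hi' : ‖u i‖ ^ 2 ≠ 0 := pow_ne_zero 2 (norm_ne_zero_iff.mpr hi)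
      have hj' : ‖u j‖ ^ 2 ≠ 0 := pow_ne_zero 2 (norm_ne_zero_iff.mpr hj)
      exact (mul_ne_zero hi' hj') this
    · have := key j i hgt
      have hi' : ‖u i‖ ^ 2 ≠ 0 := pow_ne_zero 2 (norm_ne_zero_iff.mpr hi)
      have hj' : ‖u j‖ ^ 2 ≠ 0 := pow_ne_zero 2 (norm_ne_zero_iff.mpr hj)
      exact (mul_ne_zero hj' hi') this
  · intro h
    unfold zmap
    rw [← Prod.mk_zero_zero]
    apply Finset.sum_eq_zero
    intro i _
    apply Finset.sum_eq_zero
    intro j _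
    split_ifs with hij
    · have hz : u i = 0 ∨ u j = 0 := by
        by_contra hc
        push_neg at hc
        exact hij.ne (h i j hc.1 hc.2)
      rcases hz with hz | hz <;>
        simp [hz, Prod.mk_zero_zero, Prod.ext_iff]
    · rfl
end

section
/- Let R be a positive integer and let U_1, …, U_R be tuples, each U_k = (u_1^k, …, u_M^k) with u_i^k ∈ ℝ^{m_i}. If Σ_{k=1}^R z(U_k) = (0,0)ᵀ, then z(U_k) = (0,0)ᵀ for every k ∈ {1, …, R}. -/
open scoped BigOperators

/-- if `∑_{k=1}^R z(U_k) = (0,0)ᵀ` then `z(U_k) = (0,0)ᵀ` for every `k`. -/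
theorem stmt_4 (R M : ℕ) (hR : 0 < R) (hM : 0 < M) (m : Fin M → ℕ) (hm : ∀ i, 0 < m i)
    (U : Fin R → ∀ i : Fin M, EuclideanSpace ℝ (Fin (m i)))
    (hsum : ∑ k : Fin R, zmap (U k) = (0, 0)) :
    ∀ k : Fin R, zmap (U k) = (0, 0) := by
  -- f k = sum of the two components of zmap (U k)
  set f : Fin R → ℝ := fun k =>
    ∑ i : Fin M, ∑ j : Fin M,
      if i < j then 2 * (‖U k i‖ ^ 2 * ‖U k j‖ ^ 2) else 0 with hf
  have hcomp : ∀ k, (zmap (U k)).1 + (zmap (U k)).2 = f k := by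
    intro k
    simp only [zmap, hf, Prod.fst_sum, Prod.snd_sum, ← Finset.sum_add_distrib]
    refine Finset.sum_congr rfl fun i _ => Finset.sum_congr rfl fun j _ => ?_
    by_cases h : i < j <;> simp [h] <;> ring
  have hfnonneg : ∀ k, 0 ≤ f k := by
    intro k
    refine Finset.sum_nonneg fun i _ => Finset.sum_nonneg fun j _ => ?_
    by_cases h : i < j <;> simp [h]
    positivity
  have hfsum : ∑ k : Fin R, f k = 0 := by
    have h1 : (∑ k : Fin R, zmap (U k)).1 = 0 := by rw [hsum]
    have h2 : (∑ k : Fin R, zmap (U k)).2 = 0 := by rw [hsum]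
    rw [Prod.fst_sum] at h1
    rw [Prod.snd_sum] at h2
    calc ∑ k : Fin R, f k
        = ∑ k : Fin R, ((zmap (U k)).1 + (zmap (U k)).2) := by
          exact Finset.sum_congr rfl fun k _ => (hcomp k).symm
      _ = 0 := by rw [Finset.sum_add_distrib, h1, h2]; ring
  have hfzero : ∀ k : Fin R, f k = 0 := by
    intro k
    have := (Finset.sum_eq_zero_iff_of_nonneg (fun k _ => hfnonneg k)).mp hfsum
    exact this k (Finset.mem_univ k)
  intro k
  -- each pair product vanishes
  have hpair : ∀ i j : Fin M, i < j → ‖U k i‖ ^ 2 * ‖U k j‖ ^ 2 = 0 := by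
    intro i j hij
    have h0 := hfzero k
    rw [hf] at h0
    have hnonneg : ∀ i ∈ (Finset.univ : Finset (Fin M)), 0 ≤
        ∑ j : Fin M, if i < j then 2 * (‖U k i‖ ^ 2 * ‖U k j‖ ^ 2) else 0 := by
      intro i _
      refine Finset.sum_nonneg fun j _ => ?_
      by_cases h : i < j <;> simp [h]
      positivity
    have hrow := (Finset.sum_eq_zero_iff_of_nonneg hnonneg).mp h0 i (Finset.mem_univ i)
    have hnonneg2 : ∀ j ∈ (Finset.univ : Finset (Fin M)), (0:ℝ) ≤
        if i < j then 2 * (‖U k i‖ ^ 2 * ‖U k j‖ ^ 2) else 0 := by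
      intro j _
      by_cases h : i < j <;> simp [h]
      positivity
    have hentry := (Finset.sum_eq_zero_iff_of_nonneg hnonneg2).mp hrow j (Finset.mem_univ j)
    rw [if_pos hij] at hentry
    linarith
  -- conclude zmap (U k) = 0
  rw [zmap]
  have : ∀ i ∈ (Finset.univ : Finset (Fin M)),
      (∑ j : Fin M, if i < j then
        (‖U k i‖ ^ 2 * ‖U k j‖ ^ 2 + (∑ a, U k i a) * (∑ l, U k j l),
         ‖U k i‖ ^ 2 * ‖U k j‖ ^ 2 - (∑ a, U k i a) * (∑ l, U k j l))
      else 0) = (0 : ℝ × ℝ) := by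
    intro i _
    refine Finset.sum_eq_zero fun j _ => ?_
    by_cases hij : i < j
    · rw [if_pos hij]
      have hp := hpair i j hij
      rcases mul_eq_zero.mp hp with h | h
      · have hi : U k i = 0 := by
          have := pow_eq_zero_iff (n := 2) (by norm_num) |>.mp h
          exact norm_eq_zero.mp this
        simp [hi, h]
      · have hj : U k j = 0 := by
          have := pow_eq_zero_iff (n := 2) (by norm_num) |>.mp h
          exact norm_eq_zero.mp this
        simp [hj, h]
    · rw [if_neg hij]
  rw [Finset.sum_eq_zero this]
  rfl
end

section
/- Let U^1, …, U^M ⊆ ℝ^{m_1}, …, ℝ^{m_M} be sets each containing 0, and define the star-shaped set U# := ∪_{k=1}^M ( {0} × ⋯ × U^k × ⋯ × {0} ) ⊆ ℝ^{m_1} × ⋯ × ℝ^{m_M} (with U^k in the k-th slot). Then U# = { U ∈ U^1 × U^2 × ⋯ × U^M : z(U) = (0,0)ᵀ }, where z(U) := Σ_{1 ≤ i < j ≤ M} ( ‖u_i‖²‖u_j‖² (1,1)ᵀ + (u_i ⊛ u_j)(1,−1)ᵀ ). -/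
open scoped BigOperators

/-- The "star"-shaped set `U# = ∪_k ({0} × ⋯ × U^k × ⋯ × {0})`. -/
def starSet {M : ℕ} {m : Fin M → ℕ}
    (Uset : ∀ i : Fin M, Set (EuclideanSpace ℝ (Fin (m i)))) :
    Set (∀ i : Fin M, EuclideanSpace ℝ (Fin (m i))) :=
  ⋃ k : Fin M, {u | u k ∈ Uset k ∧ ∀ i : Fin M, i ≠ k → u i = 0}

/-- `U# = { U ∈ U^1 × ⋯ × U^M : z(U) = (0,0)ᵀ }`. -/
theorem stmt_5 (M : ℕ) (hM : 0 < M) (m : Fin M → ℕ) (hm : ∀ i, 0 < m i)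
    (Uset : ∀ i : Fin M, Set (EuclideanSpace ℝ (Fin (m i))))
    (h0 : ∀ i, (0 : EuclideanSpace ℝ (Fin (m i))) ∈ Uset i) :
    starSet Uset = {u : ∀ i : Fin M, EuclideanSpace ℝ (Fin (m i)) |
      (∀ i, u i ∈ Uset i) ∧ zmap u = (0, 0)} := by
  ext u
  simp only [starSet, Set.mem_iUnion, Set.mem_setOf_eq]
  constructor
  · rintro ⟨k, huk, hz⟩
    refine ⟨fun i => ?_, ?_⟩
    · by_cases hik : i = k
      · subst hik; exact huk
      · rw [hz i hik]; exact h0 i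
    · unfold zmap
      rw [show ((0,0) : ℝ × ℝ) = 0 from rfl]
      refine Finset.sum_eq_zero fun i _ => Finset.sum_eq_zero fun j _ => ?_
      split_ifs with hij
      · have hne : i ≠ j := ne_of_lt hij
        have h0i : u i = 0 ∨ u j = 0 := by
          by_cases hik : i = k
          · right; exact hz j (fun h => hne (hik.trans h.symm))
          · left; exact hz i hik
        rcases h0i with h | h <;>
          · rw [h]
            simp [Prod.ext_iff, EuclideanSpace.norm_eq]
      · rfl
  · rintro ⟨hu, hz⟩
    have hsum : ∑ i : Fin M, ∑ j : Fin M,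
        (if i < j then ‖u i‖ ^ 2 * ‖u j‖ ^ 2 else 0) = 0 := by
      have h1 : (zmap u).1 + (zmap u).2 = 0 := by rw [hz]; norm_num
      have h2 : (zmap u).1 + (zmap u).2 = ∑ i : Fin M, ∑ j : Fin M,
          (if i < j then 2 * (‖u i‖ ^ 2 * ‖u j‖ ^ 2) else 0) := by
        simp only [zmap, Prod.fst_sum, Prod.snd_sum, ← Finset.sum_add_distrib]
        refine Finset.sum_congr rfl fun i _ => Finset.sum_congr rfl fun j _ => ?_
        split_ifs <;> simp <;> ring
      have h3 : ∑ i : Fin M, ∑ j : Fin M,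
          (if i < j then 2 * (‖u i‖ ^ 2 * ‖u j‖ ^ 2) else 0) =
          2 * ∑ i : Fin M, ∑ j : Fin M,
          (if i < j then ‖u i‖ ^ 2 * ‖u j‖ ^ 2 else 0) := by
        simp [Finset.mul_sum, mul_ite]
      have := h2.symm.trans h1
      rw [h3] at this; linarith
    have hpair : ∀ i j : Fin M, i < j → u i = 0 ∨ u j = 0 := by
      intro i j hij
      have hnn : ∀ i ∈ (Finset.univ : Finset (Fin M)), 0 ≤ ∑ j : Fin M,
          (if i < j then ‖u i‖ ^ 2 * ‖u j‖ ^ 2 else 0) := by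
        intro i _
        refine Finset.sum_nonneg fun j _ => ?_
        split_ifs <;> positivity
      have h4 := (Finset.sum_eq_zero_iff_of_nonneg hnn).mp hsum i (Finset.mem_univ i)
      have hnn2 : ∀ j ∈ (Finset.univ : Finset (Fin M)),
          (0:ℝ) ≤ (if i < j then ‖u i‖ ^ 2 * ‖u j‖ ^ 2 else 0) := by
        intro j _; split_ifs <;> positivity
      have h5 := (Finset.sum_eq_zero_iff_of_nonneg hnn2).mp h4 j (Finset.mem_univ j)
      rw [if_pos hij] at h5
      rcases mul_eq_zero.mp h5 with h | h
      · exact Or.inl (norm_eq_zero.mp (pow_eq_zero_iff two_ne_zero |>.mp h))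
      · exact Or.inr (norm_eq_zero.mp (pow_eq_zero_iff two_ne_zero |>.mp h))
    by_cases hall : ∀ i, u i = 0
    · exact ⟨⟨0, hM⟩, by rw [hall]; exact h0 _, fun i _ => hall i⟩
    · push_neg at hall
      obtain ⟨k, hk⟩ := hall
      refine ⟨k, hu k, fun i hik => ?_⟩
      rcases lt_or_gt_of_ne hik with h | h
      · rcases hpair i k h with h' | h'
        · exact h'
        · exact absurd h' hk
      · rcases hpair k i h with h' | h'
        · exact absurd h' hk
        · exact h'
end

section
/- Consider the auxiliary discrete dynamics w_{t+1} = w_t + z(U_t) on ℝ² for t = 0, …, N−1 with w_0 = (0,0)ᵀ, where each U_t = (u_1^t, …, u_M^t) with u_i^t ∈ ℝ^{m_i}. If additionally w_N = (0,0)ᵀ, then z(U_t) = (0,0)ᵀ for every t ∈ {0,…,N−1}, and consequently at each time t at most one of the vectors u_1^t, …, u_M^t is nonzero. -/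
open scoped BigOperators

/-!
Adding the two coordinates of `z(U)` cancels the cross terms `u_i ⊛ u_j` and leaves
`2 Σ_{i<j} ‖u_i‖²‖u_j‖² ≥ 0`. Since `w_N = Σ_t z(U_t) = 0`, every one of these nonnegative
quantities vanishes, so at each time all products `‖u_i‖‖u_j‖` with `i < j` vanish: at most
one `u_i` is nonzero, and then every term of `z(U_t)` is zero.
-/

open Finset

theorem eq_sum_range_of_succ_eq_add {G : Type*} [AddCommMonoid G] {w z : ℕ → G} {N : ℕ}
    (h0 : w 0 = 0) (hstep : ∀ t < N, w (t + 1) = w t + z t) :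
    w N = ∑ t ∈ range N, z t := by
  induction N with
  | zero => simpa using h0
  | succ n ih =>
    rw [sum_range_succ, hstep n n.lt_succ_self, ih fun t ht => hstep t (ht.trans n.lt_succ_self)]

section zmap

variable {M : ℕ} {m : Fin M → ℕ} (u : ∀ i : Fin M, EuclideanSpace ℝ (Fin (m i)))

theorem zmap_fst_add_snd :
    (zmap u).1 + (zmap u).2 =
      ∑ i, ∑ j, if i < j then 2 * (‖u i‖ ^ 2 * ‖u j‖ ^ 2) else 0 := by
  simp only [zmap, Prod.fst_sum, Prod.snd_sum, apply_ite Prod.fst, apply_ite Prod.snd,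
    Prod.fst_zero, Prod.snd_zero, ← sum_add_distrib]
  refine sum_congr rfl fun i _ => sum_congr rfl fun j _ => ?_
  split <;> ring

theorem zmap_fst_add_snd_nonneg : 0 ≤ (zmap u).1 + (zmap u).2 := by
  rw [zmap_fst_add_snd]
  refine sum_nonneg fun i _ => sum_nonneg fun j _ => ?_
  split <;> positivity

variable {u}

theorem eq_of_ne_zero_of_zmap_fst_add_snd_eq_zero (h : (zmap u).1 + (zmap u).2 = 0) :
    ∀ i j, u i ≠ 0 → u j ≠ 0 → i = j := by
  have hpair : ∀ i j : Fin M, i < j → u i = 0 ∨ u j = 0 := by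
    rw [zmap_fst_add_snd, sum_eq_zero_iff_of_nonneg fun i _ =>
      sum_nonneg fun j _ => by split <;> positivity] at h
    intro i j hij
    have := (sum_eq_zero_iff_of_nonneg fun j _ => by split <;> positivity).1
      (h i (mem_univ i)) j (mem_univ j)
    simpa [hij] using this
  intro i j hi hj
  rcases lt_trichotomy i j with hij | hij | hij
  · exact (hpair i j hij).elim (absurd · hi) (absurd · hj)
  · exact hij
  · exact (hpair j i hij).elim (absurd · hj) (absurd · hi)

theorem zmap_eq_zero_of_eq_of_ne_zero (h : ∀ i j, u i ≠ 0 → u j ≠ 0 → i = j) : zmap u = 0 := by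
  refine sum_eq_zero fun i _ => sum_eq_zero fun j _ => ?_
  split_ifs with hij
  · have : u i = 0 ∨ u j = 0 := by
      by_contra! hne
      exact hij.ne (h i j hne.1 hne.2)
    rcases this with h0 | h0 <;> simp [h0]
  · rfl

end zmap

theorem stmt_6_general (N M : ℕ) (m : Fin M → ℕ)
    (U : ℕ → ∀ i : Fin M, EuclideanSpace ℝ (Fin (m i)))
    (w : ℕ → ℝ × ℝ)
    (hw0 : w 0 = (0, 0))
    (hdyn : ∀ t < N, w (t + 1) = w t + zmap (U t))
    (hwN : w N = (0, 0)) :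
    ∀ t < N, zmap (U t) = (0, 0) ∧
      ∀ i j : Fin M, U t i ≠ 0 → U t j ≠ 0 → i = j := by
  have hsum : ∑ t ∈ range N, ((zmap (U t)).1 + (zmap (U t)).2) = 0 := by
    have := congrArg (fun p : ℝ × ℝ => p.1 + p.2)
      ((eq_sum_range_of_succ_eq_add hw0 hdyn).symm.trans hwN)
    simpa [Prod.fst_sum, Prod.snd_sum, sum_add_distrib] using this
  intro t ht
  have hzero := (sum_eq_zero_iff_of_nonneg fun t _ => zmap_fst_add_snd_nonneg (U t)).1 hsum t
    (mem_range.2 ht)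
  have hsingle := eq_of_ne_zero_of_zmap_fst_add_snd_eq_zero hzero
  exact ⟨zmap_eq_zero_of_eq_of_ne_zero hsingle, hsingle⟩

/-- for the auxiliary dynamics `w_{t+1} = w_t + z(U_t)` with
`w_0 = w_N = (0,0)ᵀ`, we get `z(U_t) = (0,0)ᵀ` for every `t`, and at each time
at most one of the vectors `u_1^t, …, u_M^t` is nonzero. -/
theorem stmt_6 (N M : ℕ) (hN : 0 < N) (hM : 0 < M) (m : Fin M → ℕ) (hm : ∀ i, 0 < m i)
    (U : ℕ → ∀ i : Fin M, EuclideanSpace ℝ (Fin (m i)))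
    (w : ℕ → ℝ × ℝ)
    (hw0 : w 0 = (0, 0))
    (hdyn : ∀ t < N, w (t + 1) = w t + zmap (U t))
    (hwN : w N = (0, 0)) :
    ∀ t < N, zmap (U t) = (0, 0) ∧
      ∀ i j : Fin M, U t i ≠ 0 → U t j ≠ 0 → i = j :=
  stmt_6_general N M m U w hw0 hdyn hwN
end
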